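/- The hypotenusal numbers satisfy a[i] ≤ a[i-1]² for all i ≥ 4, and a[i] ≤ 2^(2^i) for all i ≥ 4. Combined with the lower bound, 2^(2^(i-2)+1) ≤ a[i] ≤ 2^(2^i) for i ≥ 4. -/

import Mathlib

open Finset

/-- Generalized binomial coefficient `C(x, j)` for integers `x` and `j`:
`0` for `j < 0`, and the usual polynomial extension otherwise. -/
def izchoose (x : ℤ) (j : ℤ) : ℤ :=
  if j < 0 then 0
  else if 0 ≤ x then ((x.toNat).choose j.toNat : ℤ)
  else (-1) ^ j.toNat * (((j - x - 1).toNat).choose j.toNat : ℤ)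

/-- `kBinDecomp k m t a` : `m = C(a 0, k) + C(a 1, k-1) + ⋯ + C(a t, k - t)` is the
`k`-binomial (cascade) decomposition of `m`, with `a 0 > a 1 > ⋯ > a t ≥ k - t ≥ 1`. -/
def kBinDecomp (k m t : ℕ) (a : ℕ → ℕ) : Prop :=
  t + 1 ≤ k ∧ (∀ i, i < t → a (i + 1) < a i) ∧ k - t ≤ a t ∧
    m = ∑ i ∈ Finset.range (t + 1), (a i).choose (k - i)

/-- Full `k`-binomial decomposition: `m = C(α 0, k) + ⋯ + C(α (k-1), 1)` with
`α 0 > ⋯ > α (k-2) ≥ α (k-1) ≥ 1` and all coefficients at least `1`. -/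
def fullKBinDecomp (k m : ℕ) (α : ℕ → ℕ) : Prop :=
  (∀ i, i + 1 ≤ k - 2 → α (i + 1) < α i) ∧ (2 ≤ k → α (k - 1) ≤ α (k - 2)) ∧
    (∀ i, i < k → 1 ≤ α i) ∧ m = ∑ i ∈ Finset.range k, (α i).choose (k - i)

/-- `(β 0, …, β (k-1))` is the shadow `k`-binomial decomposition of the family `S`:
for every `0 ≤ i ≤ k-1`, `|∂^i S| = C(β 0, k-i) + C(β 1, k-1-i) + ⋯ + C(β (k-1), 1-i)`,
where generalized integer binomial coefficients are used. -/
def shadowDecomp {n : ℕ} (k : ℕ) (S : Finset (Finset (Fin n))) (β : ℕ → ℤ) : Prop :=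
  ∀ i, i < k → ((Finset.shadow^[i] S).card : ℤ) =
    ∑ j ∈ Finset.range k, izchoose (β j) ((k : ℤ) - i - j)

/-- `S` is extremal for the Kruskal–Katona theorem: the cardinality of its lower shadow
equals the Kruskal–Katona lower bound determined by the `k`-binomial decomposition of `|S|`. -/
def IsExtremal {n : ℕ} (k : ℕ) (S : Finset (Finset (Fin n))) : Prop :=
  ∃ t a, kBinDecomp k S.card t a ∧
    (Finset.shadow S).card = ∑ i ∈ Finset.range (t + 1), (a i).choose (k - 1 - i)

/-- `S` is an initial segment in the colexicographic order among `k`-subsets of `Fin n`. -/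
def IsInitColex (n k : ℕ) (S : Finset (Finset (Fin n))) : Prop :=
  (∀ s ∈ S, s.card = k) ∧
    ∀ s ∈ S, ∀ t : Finset (Fin n), t.card = k → toColex t < toColex s → t ∈ S


/-- Hamilton's numbers (rational-valued), following the classical recursion. -/
def hamilton : ℕ → ℚ
  | 0 => 2
  | 1 => 2
  | (m + 2) =>
      2 + ∑ i ∈ Finset.range (m + 1),
        (-1 : ℚ) ^ (i + 2) *
          (∏ j ∈ Finset.range (i + 2), (hamilton (m + 1 - i) - (j : ℚ))) / ((i + 2).factorial : ℚ)
  termination_by m => m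
  decreasing_by simp_wf <;> omega

/-- The hypotenusal numbers `a[n]` (OEIS A001660): `a[0] = 1` and
`a[n] = h[n+1] - h[n]` for `n > 0`, where `h` are Hamilton's numbers.
(`hypot 1 = 1`, `hypot 2 = 2`, `hypot 3 = 6`, `hypot 4 = 36`, `hypot 5 = 876`, …) -/
def hypot (i : ℕ) : ℚ := if i = 0 then 1 else hamilton (i + 1) - hamilton i

open Polynomial

/-!
Hamilton's recursion can be rewritten with integer binomial coefficients,
`h (m + 2) = 2 + ∑_{i ≤ m} (-1)^i C(h (m + 1 - i), i + 2)`. Since `C(h k, j + 1) ≤ C(h (k + 1), j)`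
for `j ≥ 2`, the terms decrease, so `h (m + 2)` lies between `2 + C(h (m + 1), 2) - C(h m, 3)` and
`2 + C(h (m + 1), 2)`. From index `4` on this keeps `h (n + 1)` between `h n ^ 2 / 3` and
`h n ^ 2 / 2 + 2`, and with those bounds the differences `a n = h (n + 1) - h n` satisfy
`a n ^ 2 / 2 ≤ a (n + 1) ≤ a n ^ 2`. Iterating from `a 4 = 36` gives both bounds.
-/

theorem Ring.factorial_mul_choose_eq_prod {R : Type*} [CommRing R] [BinomialRing R] (r : R)
    (n : ℕ) : (n.factorial : R) * Ring.choose r n = ∏ j ∈ range n, (r - j) := by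
  rw [← nsmul_eq_mul, ← Ring.descPochhammer_eq_factorial_smul_choose, ← aeval_eq_smeval,
    ← descPochhammer_eval_eq_prod_range, ← descPochhammer_map (algebraMap ℤ R),
    eval_map_algebraMap]

theorem Ring.choose_eq_prod_div {K : Type*} [Field K] [CharZero K] (a : K) (n : ℕ) :
    Ring.choose a n = (∏ j ∈ range n, (a - j)) / n.factorial := by
  rw [eq_div_iff (by exact_mod_cast n.factorial_ne_zero), mul_comm,
    Ring.factorial_mul_choose_eq_prod]

theorem Int.choose_nonneg {a : ℤ} (ha : 0 ≤ a) (n : ℕ) : 0 ≤ Ring.choose a n := by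
  lift a to ℕ using ha
  rw [Ring.choose_natCast]
  positivity

theorem Nat.choose_succ_le_choose_of_le {a b k j : ℕ} (hba : b ≤ a + 1)
    (hk : b.choose (k + 1) ≤ a.choose k) (hkj : k ≤ j) : b.choose (j + 1) ≤ a.choose j := by
  induction j, hkj using Nat.le_induction with
  | base => exact hk
  | succ j _ ih =>
    have key : b.choose (j + 2) * (j + 2) ≤ a.choose (j + 1) * (j + 1) := by
      rw [Nat.choose_succ_right_eq b (j + 1), Nat.choose_succ_right_eq a j]
      exact Nat.mul_le_mul ih (by omega)
    exact Nat.le_of_mul_le_mul_right (key.trans (Nat.mul_le_mul_left _ (by omega))) (by omega)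

theorem sum_range_succ_alternating {R : Type*} [Ring R] (t : ℕ → R) (n : ℕ) :
    ∑ i ∈ range (n + 1), (-1) ^ i * t i = t 0 - ∑ i ∈ range n, (-1) ^ i * t (i + 1) := by
  rw [sum_range_succ', sub_eq_add_neg, add_comm, ← sum_neg_distrib]
  simp [pow_succ]

section Alternating

variable {R : Type*} [CommRing R] [LinearOrder R] [IsStrictOrderedRing R]

theorem alternating_sum_mem_Icc {t : ℕ → R} {n : ℕ} (hmono : ∀ i < n, t (i + 1) ≤ t i)
    (hlast : 0 ≤ t n) :
    0 ≤ ∑ i ∈ range (n + 1), (-1) ^ i * t i ∧ ∑ i ∈ range (n + 1), (-1) ^ i * t i ≤ t 0 := by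
  induction n generalizing t with
  | zero => simpa using hlast
  | succ n ih =>
    obtain ⟨hlo, hup⟩ := ih (t := fun i => t (i + 1)) (fun i hi => hmono (i + 1) (by omega))
      hlast
    have h01 := hmono 0 (by omega)
    rw [sum_range_succ_alternating]
    constructor <;> linarith

theorem sub_le_alternating_sum {t : ℕ → R} {n : ℕ} (hmono : ∀ i < n + 1, t (i + 1) ≤ t i)
    (hlast : 0 ≤ t (n + 1)) : t 0 - t 1 ≤ ∑ i ∈ range (n + 2), (-1) ^ i * t i := by
  have hup := (alternating_sum_mem_Icc (t := fun i => t (i + 1))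
    (fun i hi => hmono (i + 1) (by omega)) hlast).2
  rw [sum_range_succ_alternating]
  linarith

end Alternating

/-- Hamilton's numbers as integers: the quotient of products in `hamilton` is the binomial
coefficient `Ring.choose`. -/
def hamiltonInt : ℕ → ℤ
  | 0 => 2
  | 1 => 2
  | m + 2 => 2 + ∑ i ∈ range (m + 1), (-1) ^ i * Ring.choose (hamiltonInt (m + 1 - i)) (i + 2)

theorem hamiltonInt_add_two (m : ℕ) : hamiltonInt (m + 2) =
    2 + ∑ i ∈ range (m + 1), (-1) ^ i * Ring.choose (hamiltonInt (m + 1 - i)) (i + 2) := by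
  rw [hamiltonInt]

theorem hamiltonInt_zero : hamiltonInt 0 = 2 := by rw [hamiltonInt]
theorem hamiltonInt_one : hamiltonInt 1 = 2 := by rw [hamiltonInt]

theorem hamiltonInt_two : hamiltonInt 2 = 3 := by
  rw [hamiltonInt_add_two]; simp [hamiltonInt_one]; decide

theorem hamiltonInt_three : hamiltonInt 3 = 5 := by
  rw [hamiltonInt_add_two]; simp [sum_range_succ, hamiltonInt_one, hamiltonInt_two]; decide

theorem hamiltonInt_four : hamiltonInt 4 = 11 := by
  rw [hamiltonInt_add_two]
  simp [sum_range_succ, hamiltonInt_one, hamiltonInt_two, hamiltonInt_three]; decide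

theorem hamiltonInt_five : hamiltonInt 5 = 47 := by
  rw [hamiltonInt_add_two]
  simp [sum_range_succ, hamiltonInt_one, hamiltonInt_two, hamiltonInt_three, hamiltonInt_four]
  decide

theorem cast_hamiltonInt (n : ℕ) : (hamiltonInt n : ℚ) = hamilton n := by
  induction n using Nat.strong_induction_on with
  | _ n ih =>
  match n, ih with
  | 0, _ => rw [hamiltonInt, hamilton]; norm_num
  | 1, _ => rw [hamiltonInt, hamilton]; norm_num
  | m + 2, ih =>
    rw [hamiltonInt_add_two, hamilton]
    push_cast
    refine congrArg _ (sum_congr rfl fun i hi => ?_)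
    rw [← eq_intCast (Int.castRingHom ℚ), Ring.map_choose, eq_intCast,
      ih _ (by have := mem_range.1 hi; omega), Ring.choose_eq_prod_div]
    ring

theorem hypot_eq_sub {i : ℕ} (hi : i ≠ 0) :
    hypot i = ((hamiltonInt (i + 1) - hamiltonInt i : ℤ) : ℚ) := by
  rw [hypot, if_neg hi]
  push_cast
  rw [cast_hamiltonInt, cast_hamiltonInt]

/-- Base case of `C(g, j + 1) ≤ C(h, j)` for `j ≥ 2` (`ShiftedChooseLE.choose_succ_le`). -/
def ShiftedChooseLE (g h : ℤ) : Prop :=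
  0 ≤ g ∧ g ≤ h ∧ Ring.choose g 3 ≤ Ring.choose h 2

theorem ShiftedChooseLE.choose_succ_le {g h : ℤ} (hgh : ShiftedChooseLE g h) {j : ℕ}
    (hj : 2 ≤ j) : Ring.choose g (j + 1) ≤ Ring.choose h j := by
  obtain ⟨hg, hle, h3⟩ := hgh
  lift h to ℕ using hg.trans hle
  lift g to ℕ using hg
  simp only [Ring.choose_natCast, Nat.cast_le] at h3 ⊢
  exact Nat.choose_succ_le_choose_of_le (by omega) h3 hj

theorem shiftedChooseLE_hamiltonInt_of_lt_four {k : ℕ} (hk : k < 4) :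
    ShiftedChooseLE (hamiltonInt k) (hamiltonInt (k + 1)) := by
  interval_cases k <;>
  simp [ShiftedChooseLE, hamiltonInt_zero, hamiltonInt_one, hamiltonInt_two, hamiltonInt_three,
    hamiltonInt_four] <;> decide

theorem two_mul_choose_two (h : ℤ) : 2 * Ring.choose h 2 = h * (h - 1) := by
  simpa [prod_range_succ] using Ring.factorial_mul_choose_eq_prod h 2

theorem six_mul_choose_three (g : ℤ) : 6 * Ring.choose g 3 = g * (g - 1) * (g - 2) := by
  have := Ring.factorial_mul_choose_eq_prod g 3
  simp only [prod_range_succ, prod_range_zero] at this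
  norm_num [Nat.factorial] at this
  linear_combination this

theorem hamiltonInt_add_two_bounds {m : ℕ} (hm : 1 ≤ m)
    (hstep : ∀ k ≤ m, ShiftedChooseLE (hamiltonInt k) (hamiltonInt (k + 1))) :
    2 * hamiltonInt (m + 2) ≤ hamiltonInt (m + 1) * (hamiltonInt (m + 1) - 1) + 4 ∧
    3 * (hamiltonInt (m + 1) * (hamiltonInt (m + 1) - 1)) + 12 ≤
      6 * hamiltonInt (m + 2) + hamiltonInt m * (hamiltonInt m - 1) * (hamiltonInt m - 2) := by
  let t : ℕ → ℤ := fun i => Ring.choose (hamiltonInt (m + 1 - i)) (i + 2)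
  have hmono : ∀ i < m, t (i + 1) ≤ t i := fun i hi => by
    have := (hstep (m - i) (by omega)).choose_succ_le (j := i + 2) (by omega)
    simpa only [t, show m + 1 - (i + 1) = m - i by omega, show m + 1 - i = m - i + 1 by omega,
      add_right_comm i 1 2] using this
  have hlast : 0 ≤ t m := Int.choose_nonneg (by simp [hamiltonInt_one]) _
  have hup := (alternating_sum_mem_Icc hmono hlast).2
  obtain ⟨n, rfl⟩ : ∃ n, m = n + 1 := ⟨m - 1, by omega⟩
  have hlo := sub_le_alternating_sum hmono hlast
  have h2 := two_mul_choose_two (hamiltonInt (n + 2))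
  have h3 := six_mul_choose_three (hamiltonInt (n + 1))
  simp only [t, Nat.sub_zero, show n + 1 + 1 - 1 = n + 1 by omega] at hlo hup
  rw [hamiltonInt_add_two]
  constructor <;> linarith

def NearHalfSquare (g h : ℤ) : Prop :=
  11 ≤ g ∧ g ^ 2 ≤ 3 * h ∧ 2 * h ≤ g ^ 2 + 4

namespace NearHalfSquare

variable {g h h' : ℤ}

theorem shiftedChooseLE (hgh : NearHalfSquare g h) : ShiftedChooseLE g h := by
  obtain ⟨hg, hlo, -⟩ := hgh
  have key : g * (g - 1) * (g - 2) ≤ 3 * (h * (h - 1)) := by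
    nlinarith [mul_nonneg (sub_nonneg.2 hlo) (by nlinarith : (0 : ℤ) ≤ 3 * h + g ^ 2 - 3),
      mul_nonneg (pow_nonneg (by omega : (0 : ℤ) ≤ g) 3) (by omega : (0 : ℤ) ≤ g - 3),
      mul_nonneg (by omega : (0 : ℤ) ≤ g) (by omega : (0 : ℤ) ≤ g - 1)]
  refine ⟨by omega, by nlinarith, ?_⟩
  linarith [two_mul_choose_two h, six_mul_choose_three g]

theorem next (hgh : NearHalfSquare g h) (hup : 2 * h' ≤ h * (h - 1) + 4)
    (hlo : 3 * (h * (h - 1)) + 12 ≤ 6 * h' + g * (g - 1) * (g - 2)) : NearHalfSquare h h' := by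
  obtain ⟨hg, h1, -⟩ := hgh
  refine ⟨by nlinarith, ?_, by nlinarith⟩
  nlinarith [mul_nonneg (sub_nonneg.2 h1) (by nlinarith : (0 : ℤ) ≤ 3 * h + g ^ 2 - 9),
    mul_nonneg (sq_nonneg g) (by nlinarith : (0 : ℤ) ≤ (g - 11) * (g + 2) + 13), sq_nonneg g]

theorem sub_le_sq_sub (hgh : NearHalfSquare g h) (hup : 2 * h' ≤ h * (h - 1) + 4) :
    h' - h ≤ (h - g) ^ 2 := by
  obtain ⟨hg, h1, -⟩ := hgh
  have h11g : 11 * g ≤ g * g := by nlinarith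
  nlinarith [mul_nonneg (by linarith : (0 : ℤ) ≤ 3 * h - 11 * g)
    (by linarith : (0 : ℤ) ≤ 3 * h - g)]

theorem sq_sub_le_two_mul_sub (hgh : NearHalfSquare g h)
    (hlo : 3 * (h * (h - 1)) + 12 ≤ 6 * h' + g * (g - 1) * (g - 2)) :
    (h - g) ^ 2 ≤ 2 * (h' - h) := by
  obtain ⟨hg, h1, -⟩ := hgh
  have hh : 3 * g ≤ h := by nlinarith
  nlinarith [mul_nonneg (by linarith : (0 : ℤ) ≤ g) (by linarith : (0 : ℤ) ≤ 3 * h - g ^ 2),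
    mul_nonneg (by linarith : (0 : ℤ) ≤ g - 11) (by linarith : (0 : ℤ) ≤ h)]

end NearHalfSquare

theorem nearHalfSquare_hamiltonInt {n : ℕ} (hn : 4 ≤ n) :
    NearHalfSquare (hamiltonInt n) (hamiltonInt (n + 1)) := by
  induction n using Nat.strong_induction_on with
  | _ n ih =>
  rcases hn.eq_or_lt with rfl | hn
  · rw [hamiltonInt_four, hamiltonInt_five]; norm_num [NearHalfSquare]
  obtain ⟨m, rfl⟩ : ∃ m, n = m + 1 := ⟨n - 1, by omega⟩
  have hstep : ∀ k ≤ m, ShiftedChooseLE (hamiltonInt k) (hamiltonInt (k + 1)) := fun k hk =>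
    if hk4 : k < 4 then shiftedChooseLE_hamiltonInt_of_lt_four hk4
    else (ih k (by omega) (by omega)).shiftedChooseLE
  obtain ⟨hup, hlo⟩ := hamiltonInt_add_two_bounds (by omega) hstep
  exact (ih m (by omega) (by omega)).next hup hlo

theorem shiftedChooseLE_hamiltonInt (k : ℕ) :
    ShiftedChooseLE (hamiltonInt k) (hamiltonInt (k + 1)) :=
  if hk4 : k < 4 then shiftedChooseLE_hamiltonInt_of_lt_four hk4
  else (nearHalfSquare_hamiltonInt (by omega)).shiftedChooseLE

theorem hypot_succ_le_sq {n : ℕ} (hn : 4 ≤ n) :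
    hypot (n + 1) ≤ hypot n ^ 2 ∧ hypot n ^ 2 ≤ 2 * hypot (n + 1) := by
  have hgh := nearHalfSquare_hamiltonInt hn
  obtain ⟨hup, hlo⟩ := hamiltonInt_add_two_bounds (m := n) (by omega)
    fun k _ => shiftedChooseLE_hamiltonInt k
  rw [hypot_eq_sub (by omega), hypot_eq_sub (by omega)]
  exact ⟨by exact_mod_cast hgh.sub_le_sq_sub hup, by exact_mod_cast hgh.sq_sub_le_two_mul_sub hlo⟩

section DoublyExponential

variable {R : Type*} [CommSemiring R] [PartialOrder R] [IsOrderedRing R] {v : ℕ → R} {c : R}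
  {n₀ : ℕ}

theorem le_pow_two_pow_of_le_sq (h₀ : v n₀ ≤ c ^ 2 ^ n₀) (hnn : ∀ n ≥ n₀, 0 ≤ v n)
    (hsq : ∀ n ≥ n₀, v (n + 1) ≤ v n ^ 2) {n : ℕ} (hn : n₀ ≤ n) : v n ≤ c ^ 2 ^ n := by
  induction n, hn using Nat.le_induction with
  | base => exact h₀
  | succ n hn ih =>
    calc v (n + 1) ≤ v n ^ 2 := hsq n hn
      _ ≤ (c ^ 2 ^ n) ^ 2 := pow_le_pow_left₀ (hnn n hn) ih 2
      _ = c ^ 2 ^ (n + 1) := by rw [← pow_mul, pow_succ]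

theorem pow_two_pow_le_of_sq_le (hc : 0 ≤ c) (h₀ : c ^ 2 ^ n₀ ≤ v n₀)
    (hsq : ∀ n ≥ n₀, v n ^ 2 ≤ v (n + 1)) {n : ℕ} (hn : n₀ ≤ n) : c ^ 2 ^ n ≤ v n := by
  induction n, hn using Nat.le_induction with
  | base => exact h₀
  | succ n hn ih =>
    calc c ^ 2 ^ (n + 1) = (c ^ 2 ^ n) ^ 2 := by rw [← pow_mul, pow_succ]
      _ ≤ v n ^ 2 := pow_le_pow_left₀ (by positivity) ih 2
      _ ≤ v (n + 1) := hsq n hn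

end DoublyExponential

theorem hypot_three : hypot 3 = 6 := by
  rw [hypot_eq_sub (by norm_num), hamiltonInt_four, hamiltonInt_three]; norm_num

theorem hypot_four : hypot 4 = 36 := by
  rw [hypot_eq_sub (by norm_num), hamiltonInt_five, hamiltonInt_four]; norm_num

theorem two_pow_le_hypot {n : ℕ} (hn : 4 ≤ n) : (2 : ℚ) ^ (2 ^ (n - 2) + 1) ≤ hypot n := by
  have := pow_two_pow_le_of_sq_le (v := fun k => hypot (k + 2) / 2) (n₀ := 2) zero_le_two
    (by norm_num [hypot_four])
    (fun k hk => by nlinarith [(hypot_succ_le_sq (n := k + 2) (by omega)).2])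
    (show 2 ≤ n - 2 by omega)
  rw [Nat.sub_add_cancel (by omega)] at this
  rw [pow_succ]
  linarith

theorem hypot_le_two_pow {n : ℕ} (hn : 4 ≤ n) : hypot n ≤ (2 : ℚ) ^ 2 ^ n :=
  le_pow_two_pow_of_le_sq (n₀ := 4) (by norm_num [hypot_four])
    (fun k hk => (two_pow_le_hypot hk).trans' (by positivity)) (fun k hk => (hypot_succ_le_sq hk).1)
    hn

theorem hypot_le_sq_hypot_sub_one {n : ℕ} (hn : 4 ≤ n) : hypot n ≤ hypot (n - 1) ^ 2 := by
  rcases hn.eq_or_lt with rfl | hn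
  · norm_num [hypot_three, hypot_four]
  · have := (hypot_succ_le_sq (n := n - 1) (by omega)).1
    rwa [Nat.sub_add_cancel (by omega)] at this

/-- Upper bounds for the hypotenusal numbers: `a[i] ≤ a[i-1]²` and `a[i] ≤ 2^(2^i)` for
`i ≥ 4`; combined with the lower bound, `2^(2^(i-2)+1) ≤ a[i] ≤ 2^(2^i)` for `i ≥ 4`. -/
theorem stmt16 :
    ∀ i, 4 ≤ i →
      hypot i ≤ (hypot (i - 1)) ^ 2 ∧
      hypot i ≤ (2 : ℚ) ^ (2 ^ i) ∧
      (2 : ℚ) ^ (2 ^ (i - 2) + 1) ≤ hypot i :=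
  fun _ hi => ⟨hypot_le_sq_hypot_sub_one hi, hypot_le_two_pow hi, two_pow_le_hypot hi⟩
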